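/- arXiv:1202.2598 — 4 statements merged into one kernel-verified Lean document; each statement's English description precedes it below -/
import Mathlib

section
/- Let γ be Euclidean gamma matrices with charge-conjugation matrix C, and let ξ : Fin 4 → R be a Grassmann-even Majorana spinor over a ℂ-algebra R. Then ξ̄ξ = 0, ξ̄γ5ξ = 0, and ξ̄(γ5γ_μ)ξ = 0 for every μ. -/
/-!
Expanding the Majorana conjugate, `ξ̄Mξ = -∑ (C⁻¹M)_{αβ} ξ_α ξ_β`, and a quadratic form in
pairwise commuting variables vanishes as soon as its matrix is antisymmetric. Since `C⁻¹` is
antisymmetric, `C⁻¹M` is antisymmetric exactly when `M` is fixed by the anti-automorphism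
`M ↦ C Mᵀ C⁻¹`. This map sends every `γ_μ` to `-γ_μ`, hence fixes `1`, the product `γ5` of four
gammas (reversing four pairwise anticommuting factors costs six signs), and `γ5 γ_μ`
(because `γ5` anticommutes with `γ_μ`).
-/

open Matrix Complex BigOperators

noncomputable section

abbrev M4 : Type := Matrix (Fin 4) (Fin 4) ℂ

/-- Euclidean Clifford relation: γ_μγ_ν + γ_νγ_μ = 2δ_{μν}·1. -/
def CliffordRel (γ : Fin 4 → M4) : Prop :=
  ∀ μ ν, γ μ * γ ν + γ ν * γ μ = if μ = ν then (2 : ℂ) • (1 : M4) else 0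

/-- γ5 := -(γ_0 γ_1 γ_2 γ_3). -/
def gamma5 (γ : Fin 4 → M4) : M4 := -(γ 0 * γ 1 * γ 2 * γ 3)

/-- σ_{μν} := (γ_μγ_ν - γ_νγ_μ)/2 = [γ_μ, γ_ν]/2. -/
def sigmaMat (γ : Fin 4 → M4) (μ ν : Fin 4) : M4 :=
  (2⁻¹ : ℂ) • (γ μ * γ ν - γ ν * γ μ)

/-- Charge-conjugation matrix: invertible, Cᵀ = -C, C⁻¹γ_μC = -(γ_μ)ᵀ. -/
def ChargeConj (γ : Fin 4 → M4) (C : M4) : Prop :=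
  IsUnit C.det ∧ Cᵀ = -C ∧ ∀ μ, C⁻¹ * γ μ * C = -(γ μ)ᵀ

/-- Majorana conjugate row vector: ξ̄_β := -Σ_α ξ_α·(C⁻¹)_{αβ}. -/
def MajBar {R : Type*} [Ring R] [Algebra ℂ R] (C : M4) (ξ : Fin 4 → R) (β : Fin 4) : R :=
  -∑ α, (C⁻¹ α β) • ξ α

/-- Spinor bilinear: ξ̄Mχ := Σ_{β,γ'} ξ̄_β·M_{βγ'}·χ_{γ'} (complex entries act by scalar
multiplication). -/
def bilin {R : Type*} [Ring R] [Algebra ℂ R] (C : M4) (M : M4) (ξ χ : Fin 4 → R) : R :=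
  ∑ β, ∑ g, M β g • (MajBar C ξ β * χ g)

theorem sum_smul_mul_eq_zero_of_transpose_eq_neg {K R n : Type*} [Field K] [CharZero K]
    [Ring R] [Algebra K R] [Fintype n] {A : Matrix n n K} (hA : Aᵀ = -A) {x : n → R}
    (hx : ∀ i j, x i * x j = x j * x i) :
    ∑ i, ∑ j, A i j • (x i * x j) = 0 := by
  set S := ∑ i, ∑ j, A i j • (x i * x j)
  have hS : S = -S := by
    calc S = ∑ i, ∑ j, A j i • (x j * x i) := Finset.sum_comm
      _ = ∑ i, ∑ j, (-A i j) • (x i * x j) := by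
        refine Fintype.sum_congr _ _ fun i => Fintype.sum_congr _ _ fun j => ?_
        rw [hx j i, ← neg_apply, ← hA, transpose_apply]
      _ = -S := by simp only [neg_smul, Finset.sum_neg_distrib, S]
  have h2S : (2 : K) • S = 0 := by rw [two_smul, ← neg_eq_iff_add_eq_zero, ← hS]
  exact (smul_eq_zero.mp h2S).resolve_left two_ne_zero

section ChargeTranspose

variable {n K : Type*} [Fintype n] [DecidableEq n] [CommRing K]

def chargeTranspose (C M : Matrix n n K) : Matrix n n K := C * Mᵀ * C⁻¹

variable {C : Matrix n n K}

theorem chargeTranspose_one (hC : IsUnit C.det) : chargeTranspose C 1 = 1 := by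
  rw [chargeTranspose, transpose_one, mul_one, mul_nonsing_inv C hC]

theorem chargeTranspose_neg (M : Matrix n n K) :
    chargeTranspose C (-M) = -chargeTranspose C M := by
  simp only [chargeTranspose, transpose_neg, mul_neg, neg_mul]

theorem chargeTranspose_mul (hC : IsUnit C.det) (M N : Matrix n n K) :
    chargeTranspose C (M * N) = chargeTranspose C N * chargeTranspose C M := by
  simp only [chargeTranspose, transpose_mul, Matrix.mul_assoc,
    nonsing_inv_mul_cancel_left C _ hC]

theorem transpose_inv_mul_eq_neg_of_chargeTranspose_eq (hC : IsUnit C.det) (hCT : Cᵀ = -C)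
    {M : Matrix n n K} (hM : chargeTranspose C M = M) : (C⁻¹ * M)ᵀ = -(C⁻¹ * M) := by
  have hCinvT : C⁻¹ᵀ = -C⁻¹ := by
    rw [transpose_nonsing_inv, hCT]
    exact inv_eq_left_inv (by rw [neg_mul_neg, nonsing_inv_mul C hC])
  calc (C⁻¹ * M)ᵀ = -(C⁻¹ * (C * Mᵀ * C⁻¹)) := by
        rw [transpose_mul, hCinvT, Matrix.mul_neg, Matrix.mul_assoc,
          nonsing_inv_mul_cancel_left C _ hC]
    _ = -(C⁻¹ * M) := by rw [← chargeTranspose, hM]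

end ChargeTranspose

section Anticommute

variable {A : Type*} [Ring A] {a b c d : A}

theorem mul_left_anticomm (hab : b * a = -(a * b)) (z : A) : b * (a * z) = -(a * (b * z)) := by
  rw [← mul_assoc, hab, neg_mul, mul_assoc]

theorem mul_rev_of_pairwise_anticomm
    (hba : b * a = -(a * b)) (hca : c * a = -(a * c)) (hda : d * a = -(a * d))
    (hcb : c * b = -(b * c)) (hdb : d * b = -(b * d)) (hdc : d * c = -(c * d)) :
    d * c * b * a = a * b * c * d := by
  -- the trailing `z` gives `mul_left_anticomm` a right factor to rewrite against
  have key : ∀ z, d * (c * (b * (a * z))) = a * (b * (c * (d * z))) := fun z => by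
    simp only [mul_left_anticomm hba, mul_left_anticomm hca, mul_left_anticomm hda,
      mul_left_anticomm hcb, mul_left_anticomm hdb, mul_left_anticomm hdc, mul_neg, neg_neg]
  simpa only [mul_one, mul_assoc] using key 1

theorem mul_prod_anticomm_of_pairwise_anticomm {x : A}
    (hba : b * a = -(a * b)) (hca : c * a = -(a * c)) (hda : d * a = -(a * d))
    (hcb : c * b = -(b * c)) (hdb : d * b = -(b * d)) (hdc : d * c = -(c * d))
    (hx : x = a ∨ x = b ∨ x = c ∨ x = d) :
    x * (a * b * c * d) = -(a * b * c * d * x) := by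
  have key : ∀ z, x * (a * (b * (c * (d * z)))) = -(a * (b * (c * (d * (x * z))))) := by
    rcases hx with rfl | rfl | rfl | rfl <;> intro z <;>
    simp only [mul_left_anticomm hba, mul_left_anticomm hca, mul_left_anticomm hda,
      mul_left_anticomm hcb, mul_left_anticomm hdb, mul_left_anticomm hdc, mul_neg, neg_neg]
  simpa only [mul_one, mul_assoc] using key 1

end Anticommute

section Gamma

variable {γ : Fin 4 → M4} {C : M4}

theorem CliffordRel.anticomm (hcl : CliffordRel γ) {μ ν : Fin 4} (h : μ ≠ ν) :
    γ ν * γ μ = -(γ μ * γ ν) := by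
  have h2 := hcl μ ν
  rw [if_neg h] at h2
  exact eq_neg_of_add_eq_zero_right h2

theorem CliffordRel.gamma_mul_gamma5 (hcl : CliffordRel γ) (μ : Fin 4) :
    γ μ * gamma5 γ = -(gamma5 γ * γ μ) := by
  have hμ : γ μ = γ 0 ∨ γ μ = γ 1 ∨ γ μ = γ 2 ∨ γ μ = γ 3 := by fin_cases μ <;> simp
  rw [gamma5, mul_neg, neg_mul, neg_inj]
  exact mul_prod_anticomm_of_pairwise_anticomm (hcl.anticomm (by decide))
    (hcl.anticomm (by decide)) (hcl.anticomm (by decide)) (hcl.anticomm (by decide))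
    (hcl.anticomm (by decide)) (hcl.anticomm (by decide)) hμ

theorem ChargeConj.chargeTranspose_gamma (hC : ChargeConj γ C) (μ : Fin 4) :
    chargeTranspose C (γ μ) = -γ μ := by
  obtain ⟨hdet, -, hconj⟩ := hC
  rw [chargeTranspose, ← neg_neg (γ μ)ᵀ, ← hconj μ]
  simp only [mul_neg, neg_mul, Matrix.mul_assoc, mul_nonsing_inv C hdet, mul_one,
    mul_nonsing_inv_cancel_left C _ hdet]

theorem ChargeConj.chargeTranspose_gamma5 (hcl : CliffordRel γ) (hC : ChargeConj γ C) :
    chargeTranspose C (gamma5 γ) = gamma5 γ := by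
  simp only [gamma5, chargeTranspose_neg, chargeTranspose_mul hC.1, hC.chargeTranspose_gamma,
    mul_neg, neg_mul, neg_neg, ← Matrix.mul_assoc]
  rw [mul_rev_of_pairwise_anticomm (hcl.anticomm (by decide)) (hcl.anticomm (by decide))
    (hcl.anticomm (by decide)) (hcl.anticomm (by decide)) (hcl.anticomm (by decide))
    (hcl.anticomm (by decide))]

theorem ChargeConj.chargeTranspose_gamma5_mul_gamma (hcl : CliffordRel γ)
    (hC : ChargeConj γ C) (μ : Fin 4) :
    chargeTranspose C (gamma5 γ * γ μ) = gamma5 γ * γ μ := by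
  rw [chargeTranspose_mul hC.1, hC.chargeTranspose_gamma5 hcl, hC.chargeTranspose_gamma,
    neg_mul, hcl.gamma_mul_gamma5, neg_neg]

end Gamma

theorem bilin_eq_neg_sum {R : Type*} [Ring R] [Algebra ℂ R] (C M : M4) (ξ χ : Fin 4 → R) :
    bilin C M ξ χ = -∑ α, ∑ β, (C⁻¹ * M) α β • (ξ α * χ β) := by
  simp only [bilin, MajBar, Matrix.mul_apply, Finset.sum_smul, neg_mul, Finset.sum_mul,
    smul_mul_assoc, smul_neg, smul_smul, Finset.smul_sum, Finset.sum_neg_distrib, neg_inj]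
  rw [Finset.sum_comm_cycle]
  refine Fintype.sum_congr _ _ fun α => Finset.sum_comm.trans ?_
  simp only [mul_comm (M _ _)]

theorem bilin_self_eq_zero_of_chargeTranspose_eq {R : Type*} [Ring R] [Algebra ℂ R] {C M : M4}
    (hC : IsUnit C.det) (hCT : Cᵀ = -C) (hM : chargeTranspose C M = M) {ξ : Fin 4 → R}
    (heven : ∀ α β, ξ α * ξ β = ξ β * ξ α) : bilin C M ξ ξ = 0 := by
  rw [bilin_eq_neg_sum, sum_smul_mul_eq_zero_of_transpose_eq_neg
    (transpose_inv_mul_eq_neg_of_chargeTranspose_eq hC hCT hM) heven, neg_zero]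

theorem statement2 {R : Type*} [Ring R] [Algebra ℂ R]
    (γ : Fin 4 → M4) (C : M4) (hcl : CliffordRel γ) (hC : ChargeConj γ C)
    (ξ : Fin 4 → R) (heven : ∀ α β, ξ α * ξ β = ξ β * ξ α) :
    bilin C 1 ξ ξ = 0 ∧ bilin C (gamma5 γ) ξ ξ = 0 ∧
    ∀ μ, bilin C (gamma5 γ * γ μ) ξ ξ = 0 := by
  have vanish := fun {M : M4} (hM : chargeTranspose C M = M) =>
    bilin_self_eq_zero_of_chargeTranspose_eq hC.1 hC.2.1 hM heven
  exact ⟨vanish (chargeTranspose_one hC.1), vanish (hC.chargeTranspose_gamma5 hcl),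
    fun μ => vanish (hC.chargeTranspose_gamma5_mul_gamma hcl μ)⟩
end
end

section
/- Let γ be Euclidean gamma matrices with charge-conjugation matrix C, and let ξ : Fin 4 → R be a Grassmann-even Majorana spinor over a ℂ-algebra R. Then for all μ, ν, ρ: ξ̄(γ_μγ_νγ_ρ)ξ = δ_{νρ}·ξ̄γ_μξ - δ_{μρ}·ξ̄γ_νξ + δ_{μν}·ξ̄γ_ρξ. -/
open Matrix Complex BigOperators

noncomputable section

lemma bilin_eq {R : Type*} [Ring R] [Algebra ℂ R] (C M : M4) (ξ : Fin 4 → R) :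
    bilin C M ξ ξ = -∑ α, ∑ g, (C⁻¹ * M) α g • (ξ α * ξ g) := by
  simp only [bilin, MajBar, neg_mul, smul_neg, Finset.sum_mul, smul_mul_assoc,
    Finset.smul_sum, Matrix.mul_apply, Finset.sum_smul, smul_smul,
    Finset.sum_neg_distrib, neg_inj]
  rw [Finset.sum_comm]
  conv_lhs => rw [show (∑ y : Fin 4, ∑ x : Fin 4, ∑ α : Fin 4, (M x y * C⁻¹ α x) • (ξ α * ξ y)) = ∑ y : Fin 4, ∑ α : Fin 4, ∑ x : Fin 4, (M x y * C⁻¹ α x) • (ξ α * ξ y) from Finset.sum_congr rfl fun y _ => Finset.sum_comm]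
  rw [Finset.sum_comm]
  exact Finset.sum_congr rfl fun α _ => Finset.sum_congr rfl fun g _ =>
    Finset.sum_congr rfl fun β _ => by rw [mul_comm]

lemma bilin_swap {R : Type*} [Ring R] [Algebra ℂ R] (C M : M4) (ξ : Fin 4 → R)
    (heven : ∀ α β, ξ α * ξ β = ξ β * ξ α) :
    bilin C M ξ ξ = -∑ α, ∑ g, ((C⁻¹ * M)ᵀ) α g • (ξ α * ξ g) := by
  rw [bilin_eq, neg_inj, Finset.sum_comm]
  exact Finset.sum_congr rfl fun α _ => Finset.sum_congr rfl fun g _ => by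
    rw [Matrix.transpose_apply, heven]

lemma bilin_of_transpose {R : Type*} [Ring R] [Algebra ℂ R] (C M N : M4) (ξ : Fin 4 → R)
    (heven : ∀ α β, ξ α * ξ β = ξ β * ξ α) (h : (C⁻¹ * M)ᵀ = C⁻¹ * N) :
    bilin C M ξ ξ = bilin C N ξ ξ := by
  rw [bilin_swap C M ξ heven, h, bilin_eq]

lemma bilin_add {R : Type*} [Ring R] [Algebra ℂ R] (C M N : M4) (ξ χ : Fin 4 → R) :
    bilin C (M + N) ξ χ = bilin C M ξ χ + bilin C N ξ χ := by
  simp [bilin, Matrix.add_apply, add_smul, Finset.sum_add_distrib]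

lemma bilin_sub {R : Type*} [Ring R] [Algebra ℂ R] (C M N : M4) (ξ χ : Fin 4 → R) :
    bilin C (M - N) ξ χ = bilin C M ξ χ - bilin C N ξ χ := by
  simp [bilin, Matrix.sub_apply, sub_smul, Finset.sum_sub_distrib]

lemma bilin_smul {R : Type*} [Ring R] [Algebra ℂ R] (a : ℂ) (C M : M4) (ξ χ : Fin 4 → R) :
    bilin C (a • M) ξ χ = a • bilin C M ξ χ := by
  simp [bilin, Matrix.smul_apply, smul_smul, Finset.smul_sum]

lemma bilin_zero {R : Type*} [Ring R] [Algebra ℂ R] (C : M4) (ξ χ : Fin 4 → R) :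
    bilin C (0 : M4) ξ χ = 0 := by
  simp [bilin]

lemma key_transpose (γ : Fin 4 → M4) (C : M4) (hC : ChargeConj γ C) (μ ν ρ : Fin 4) :
    (C⁻¹ * (γ μ * γ ν * γ ρ))ᵀ = C⁻¹ * (γ ρ * γ ν * γ μ) := by
  obtain ⟨hdet, hT, hγ⟩ := hC
  have hCC : C * C⁻¹ = 1 := Matrix.mul_nonsing_inv C hdet
  have hCC' : ∀ X : M4, C * (C⁻¹ * X) = X := fun X => by rw [← mul_assoc, hCC, one_mul]
  have hTinv : (C⁻¹)ᵀ = -C⁻¹ := by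
    rw [Matrix.transpose_nonsing_inv, hT]
    exact Matrix.inv_eq_right_inv (by rw [neg_mul_neg, hCC])
  have hγT : ∀ σ, (γ σ)ᵀ = -(C⁻¹ * γ σ * C) := fun σ => by rw [hγ σ, neg_neg]
  rw [Matrix.transpose_mul, Matrix.transpose_mul, Matrix.transpose_mul, hTinv,
    hγT μ, hγT ν, hγT ρ]
  simp only [neg_mul, mul_neg, neg_neg, Matrix.mul_assoc, hCC', hCC, mul_one]

lemma clifford_three (γ : Fin 4 → M4) (hcl : CliffordRel γ) (μ ν ρ : Fin 4) :
    γ μ * γ ν * γ ρ + γ ρ * γ ν * γ μ =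
      (if ν = ρ then (2:ℂ) • γ μ else 0) - (if μ = ρ then (2:ℂ) • γ ν else 0)
      + (if μ = ν then (2:ℂ) • γ ρ else 0) := by
  have h1 := hcl ν ρ
  have h2 := hcl μ ρ
  have h3 := hcl μ ν
  have e : γ μ * γ ν * γ ρ + γ ρ * γ ν * γ μ =
      γ μ * (γ ν * γ ρ + γ ρ * γ ν) - (γ μ * γ ρ + γ ρ * γ μ) * γ ν
        + γ ρ * (γ μ * γ ν + γ ν * γ μ) := by noncomm_ring
  rw [e, h1, h2, h3]
  split_ifs <;> simp [mul_smul_comm, smul_mul_assoc]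

theorem statement3 {R : Type*} [Ring R] [Algebra ℂ R]
    (γ : Fin 4 → M4) (C : M4) (hcl : CliffordRel γ) (hC : ChargeConj γ C)
    (ξ : Fin 4 → R) (heven : ∀ α β, ξ α * ξ β = ξ β * ξ α) :
    ∀ μ ν ρ, bilin C (γ μ * γ ν * γ ρ) ξ ξ =
      (if ν = ρ then bilin C (γ μ) ξ ξ else 0)
      - (if μ = ρ then bilin C (γ ν) ξ ξ else 0)
      + (if μ = ν then bilin C (γ ρ) ξ ξ else 0) := by
  intro μ ν ρ
  have hrev : bilin C (γ μ * γ ν * γ ρ) ξ ξ = bilin C (γ ρ * γ ν * γ μ) ξ ξ :=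
    bilin_of_transpose _ _ _ ξ heven (key_transpose γ C hC μ ν ρ)
  have key : bilin C (γ μ * γ ν * γ ρ) ξ ξ + bilin C (γ ρ * γ ν * γ μ) ξ ξ
      = (2:ℂ) • ((if ν = ρ then bilin C (γ μ) ξ ξ else 0)
        - (if μ = ρ then bilin C (γ ν) ξ ξ else 0)
        + (if μ = ν then bilin C (γ ρ) ξ ξ else 0)) := by
    rw [← bilin_add, clifford_three γ hcl μ ν ρ, bilin_add, bilin_sub]
    split_ifs <;> simp [bilin_smul, bilin_zero, smul_sub, smul_add]
  rw [← hrev, ← two_smul ℂ] at key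
  exact smul_right_injective R (by norm_num : (2:ℂ) ≠ 0) key
end
end

section
/- Let γ be Euclidean gamma matrices with charge-conjugation matrix C, let λ_A (A in a 16-element index set) be the sixteen basis matrices with signs c_A ∈ {±1} defined by c_A = +1 for λ_A ∈ {1, γ5, iγ5γ_μ} and c_A = -1 for λ_A ∈ {γ_μ, iσ_{μν}} (so that (λ_A)ᵀ = c_A·C⁻¹λ_AC). Let ψ^a, ψ^b, ψ^c : Fin 4 → R be Grassmann-odd Majorana spinors over a ℂ-algebra R (all twelve components pairwise anticommute). Then for every Λ among the sixteen λ_A and every spinor index α: Σ_β Λ_{αβ}·ψ^a_β·(ψ̄^bΛψ^c) = -(1/4)·Σ_A c_A·Σ_β (λ_A)_{αβ}·ψ^c_β·(ψ̄^a(Λλ_AΛ)ψ^b). -/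
/-!
Up to a power of `i`, each `λ_A` is a product of gamma matrices. Hence every `λ_A` squares to `1`,
and for `A ≠ B` some `γ_τ` anticommutes with `λ_A λ_B`, so `tr (λ_A λ_B) = 4 δ_AB`. As there are
`16 = 4²` of them, this orthogonality is equivalent to the completeness relation
`Σ_A (λ_A)_ij (λ_A)_kl = 4 δ_il δ_jk`. The transposition rule `λ_Aᵀ = c_A C⁻¹ λ_A C` turns
`c_A C⁻¹ Λ λ_A Λ` into `c_Λ Λᵀ λ_Aᵀ C⁻¹ Λ`, after which completeness collapses the sum over `A` to
`-4 Λ_αx (C⁻¹Λ)_yz`. Both sides of the identity are then the same combination of the monomials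
`ψ⁰_x ψ¹_y ψ²_z`, because `ψ²_z` commutes with the even products `ψ⁰_x ψ¹_y`.
-/

open Matrix Complex BigOperators

noncomputable section

/-- The sixteen basis matrices 1, γ5, γ_μ, iγ5γ_μ, iσ_{μν} (μ<ν). -/
def lambdaFam (γ : Fin 4 → M4) : Fin 16 → M4 :=
  ![1, gamma5 γ, γ 0, γ 1, γ 2, γ 3,
    Complex.I • (gamma5 γ * γ 0), Complex.I • (gamma5 γ * γ 1),
    Complex.I • (gamma5 γ * γ 2), Complex.I • (gamma5 γ * γ 3),
    Complex.I • sigmaMat γ 0 1, Complex.I • sigmaMat γ 0 2,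
    Complex.I • sigmaMat γ 0 3, Complex.I • sigmaMat γ 1 2,
    Complex.I • sigmaMat γ 1 3, Complex.I • sigmaMat γ 2 3]

/-- Signs c_A with (λ_A)ᵀ = c_A·C⁻¹λ_AC: +1 for 1, γ5, iγ5γ_μ; -1 for γ_μ, iσ_{μν}. -/
def cSign : Fin 16 → ℂ :=
  ![1, 1, -1, -1, -1, -1, 1, 1, 1, 1, -1, -1, -1, -1, -1, -1]

namespace Matrix

variable {ι n : Type*} [Fintype ι] [Fintype n] [DecidableEq n]

/- With `B a (i, j) = b a i j` and `B' (j, i) a = c⁻¹ * b a i j`, trace orthogonality says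
`B * B' = 1`; the matrices are square, so `B' * B = 1`, which is the claim. -/
theorem sum_apply_mul_apply_of_trace_mul {K : Type*} [Field K] [DecidableEq ι]
    {b : ι → Matrix n n K} {c : K} (hc : c ≠ 0) (hcard : Fintype.card ι = Fintype.card (n × n))
    (htr : ∀ a a', (b a * b a').trace = if a = a' then c else 0) (i j k l : n) :
    ∑ a, b a i j * b a k l = if i = l ∧ j = k then c else 0 := by
  let B : Matrix ι (n × n) K := of fun a p => b a p.1 p.2
  let B' : Matrix (n × n) ι K := of fun p a => c⁻¹ * b a p.2 p.1
  have hBB' : B * B' = 1 := by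
    ext a a'
    have : (B * B') a a' = c⁻¹ * (b a * b a').trace := by
      simp [B, B', mul_apply, trace, Fintype.sum_prod_type, Finset.mul_sum, mul_left_comm]
    rw [this, htr, one_apply]
    split_ifs <;> simp [hc]
  have := congr_fun₂ ((mul_eq_one_comm_of_card_eq _ _ _ hcard).mp hBB') (j, i) (k, l)
  simp only [B, B', mul_apply, of_apply, one_apply, Prod.mk.injEq, mul_assoc,
    ← Finset.mul_sum] at this
  rw [inv_mul_eq_iff_eq_mul₀ hc] at this
  rw [this]
  split_ifs <;> simp_all [and_comm]

theorem trace_eq_zero_of_mul_eq_neg_mul {K : Type*} [Field K] [CharZero K] {X g : Matrix n n K}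
    (hg : g * g = 1) (hXg : X * g = -(g * X)) : X.trace = 0 := by
  have : X.trace = -X.trace :=
    calc X.trace = (X * g * g).trace := by rw [mul_assoc, hg, mul_one]
      _ = -X.trace := by
        rw [hXg, neg_mul, trace_neg, mul_assoc, trace_mul_comm, mul_assoc, hg, mul_one]
  linear_combination this / 2

theorem sum_apply_mul_mul_transpose_mul_apply {R : Type*} [CommSemiring R]
    {b : ι → Matrix n n R} {c : R}
    (hb : ∀ i j k l, ∑ a, b a i j * b a k l = if i = l ∧ j = k then c else 0)
    (P Q : Matrix n n R) (i j x y : n) :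
    ∑ a, b a i j * (P * (b a)ᵀ * Q) x y = c * (P x i * Q j y) :=
  calc ∑ a, b a i j * (P * (b a)ᵀ * Q) x y
      = ∑ q, ∑ p, P x p * (∑ a, b a i j * b a q p) * Q q y := by
        simp only [mul_apply, transpose_apply, Finset.mul_sum, Finset.sum_mul]
        rw [Finset.sum_comm]
        refine Finset.sum_congr rfl fun q _ => ?_
        rw [Finset.sum_comm]
        exact Finset.sum_congr rfl fun p _ => Finset.sum_congr rfl fun a _ => by ring
    _ = c * (P x i * Q j y) := by
        simp only [hb]
        simp [ite_and, mul_ite, ite_mul, Finset.sum_ite_eq]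
        ring

end Matrix

section Clifford

variable {γ : Fin 4 → M4} {C : M4}

theorem CliffordRel.mul_self (hcl : CliffordRel γ) (μ : Fin 4) : γ μ * γ μ = 1 := by
  have h := hcl μ μ
  rw [if_pos rfl, ← two_smul ℂ] at h
  exact smul_right_injective M4 two_ne_zero h

theorem CliffordRel.mul_comm_sign (hcl : CliffordRel γ) (μ τ : Fin 4) :
    γ μ * γ τ = (-1 : ℂ) ^ (if μ = τ then 0 else 1) • (γ τ * γ μ) := by
  have h := hcl μ τ
  split_ifs at h ⊢ with hμτ
  · rw [hμτ, pow_zero, one_smul]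
  · rw [pow_one, neg_one_smul]
    linear_combination (norm := abel) h

theorem sigmaMat_eq_mul (hcl : CliffordRel γ) {μ ν : Fin 4} (h : μ ≠ ν) :
    sigmaMat γ μ ν = γ μ * γ ν := by
  have := hcl μ ν
  rw [if_neg h] at this
  rw [sigmaMat, eq_neg_of_add_eq_zero_right this, sub_neg_eq_add, ← two_smul ℂ, smul_smul,
    inv_mul_cancel₀ two_ne_zero, one_smul]

def gammaWord (γ : Fin 4 → M4) (w : List (Fin 4)) : M4 := (w.map γ).prod

theorem gammaWord_cons (a : Fin 4) (w : List (Fin 4)) :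
    gammaWord γ (a :: w) = γ a * gammaWord γ w := List.prod_cons

theorem gammaWord_mul_gamma (hcl : CliffordRel γ) (w : List (Fin 4)) (τ : Fin 4) :
    gammaWord γ w * γ τ = (-1 : ℂ) ^ w.countP (· ≠ τ) • (γ τ * gammaWord γ w) := by
  induction w with
  | nil => simp [gammaWord]
  | cons a w ih =>
    rw [gammaWord_cons, mul_assoc, ih, mul_smul_comm, ← mul_assoc, hcl.mul_comm_sign a τ,
      smul_mul_assoc, smul_smul, mul_assoc, List.countP_cons, pow_add]
    congr 2
    by_cases h : a = τ <;> simp [h]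

def wordSquareExp : List (Fin 4) → ℕ
  | [] => 0
  | a :: w => w.countP (· ≠ a) + wordSquareExp w

theorem gammaWord_mul_self (hcl : CliffordRel γ) (w : List (Fin 4)) :
    gammaWord γ w * gammaWord γ w = (-1 : ℂ) ^ wordSquareExp w • 1 := by
  induction w with
  | nil => simp [gammaWord, wordSquareExp]
  | cons a w ih =>
    rw [gammaWord_cons, mul_assoc, ← mul_assoc (gammaWord γ w), gammaWord_mul_gamma hcl,
      smul_mul_assoc, mul_smul_comm, mul_assoc, ← mul_assoc (γ a), hcl.mul_self, one_mul, ih,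
      smul_smul, wordSquareExp, pow_add]

theorem ChargeConj.mul_inv (hC : ChargeConj γ C) : C * C⁻¹ = 1 := mul_nonsing_inv C hC.1

theorem ChargeConj.inv_mul (hC : ChargeConj γ C) : C⁻¹ * C = 1 := nonsing_inv_mul C hC.1

theorem ChargeConj.transpose_inv (hC : ChargeConj γ C) : (C⁻¹)ᵀ = -C⁻¹ := by
  rw [transpose_nonsing_inv, hC.2.1]
  exact inv_eq_right_inv (by rw [neg_mul_neg, hC.mul_inv])

theorem ChargeConj.transpose_gamma (hC : ChargeConj γ C) (μ : Fin 4) :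
    (γ μ)ᵀ = -(C⁻¹ * γ μ * C) := by
  rw [hC.2.2 μ, neg_neg]

theorem ChargeConj.conj_mul_conj (hC : ChargeConj γ C) (X Y : M4) :
    C⁻¹ * X * C * (C⁻¹ * Y * C) = C⁻¹ * (X * Y) * C := by
  simp only [mul_assoc, hC.mul_inv, ← mul_assoc C, one_mul]

def wordTransposeExp : List (Fin 4) → ℕ
  | [] => 0
  | a :: w => wordTransposeExp w + 1 + w.countP (· ≠ a)

theorem gammaWord_transpose (hcl : CliffordRel γ) (hC : ChargeConj γ C) (w : List (Fin 4)) :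
    (gammaWord γ w)ᵀ = (-1 : ℂ) ^ wordTransposeExp w • (C⁻¹ * gammaWord γ w * C) := by
  induction w with
  | nil => simp [gammaWord, wordTransposeExp, hC.inv_mul]
  | cons a w ih =>
    calc (gammaWord γ (a :: w))ᵀ = (gammaWord γ w)ᵀ * (γ a)ᵀ := by
          rw [gammaWord_cons, transpose_mul]
      _ = -((-1 : ℂ) ^ wordTransposeExp w • (C⁻¹ * (gammaWord γ w * γ a) * C)) := by
          rw [ih, hC.transpose_gamma, mul_neg, smul_mul_assoc, hC.conj_mul_conj]
      _ = (-1 : ℂ) ^ wordTransposeExp (a :: w) • (C⁻¹ * gammaWord γ (a :: w) * C) := by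
          rw [gammaWord_mul_gamma hcl, mul_smul_comm, smul_mul_assoc, smul_smul, ← neg_smul,
            gammaWord_cons, wordTransposeExp, pow_add, pow_add]
          ring_nf

def lambdaWord : Fin 16 → List (Fin 4) :=
  ![[], [0, 1, 2, 3], [0], [1], [2], [3], [0, 1, 2, 3, 0], [0, 1, 2, 3, 1], [0, 1, 2, 3, 2],
    [0, 1, 2, 3, 3], [0, 1], [0, 2], [0, 3], [1, 2], [1, 3], [2, 3]]

def lambdaPhase : Fin 16 → ℕ := ![0, 2, 0, 0, 0, 0, 3, 3, 3, 3, 1, 1, 1, 1, 1, 1]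

theorem lambdaFam_eq (hcl : CliffordRel γ) (A : Fin 16) :
    lambdaFam γ A = I ^ lambdaPhase A • gammaWord γ (lambdaWord A) := by
  fin_cases A <;>
    simp [lambdaFam, lambdaPhase, lambdaWord, gammaWord, gamma5, sigmaMat_eq_mul hcl, mul_assoc]

theorem even_lambdaPhase_add_wordSquareExp :
    ∀ A, Even (lambdaPhase A + wordSquareExp (lambdaWord A)) := by
  decide

theorem exists_odd_countP_add_countP : ∀ A B : Fin 16, A ≠ B →
    ∃ τ, Odd ((lambdaWord A).countP (· ≠ τ) + (lambdaWord B).countP (· ≠ τ)) := by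
  decide

theorem cSign_eq (A : Fin 16) : cSign A = (-1) ^ wordTransposeExp (lambdaWord A) := by
  fin_cases A <;> simp [cSign, wordTransposeExp, lambdaWord] <;> norm_num

theorem cSign_mul_self (A : Fin 16) : cSign A * cSign A = 1 := by
  fin_cases A <;> simp [cSign]

theorem lambdaFam_mul_gamma (hcl : CliffordRel γ) (A : Fin 16) (τ : Fin 4) :
    lambdaFam γ A * γ τ = (-1 : ℂ) ^ (lambdaWord A).countP (· ≠ τ) • (γ τ * lambdaFam γ A) := by
  rw [lambdaFam_eq hcl, smul_mul_assoc, gammaWord_mul_gamma hcl, mul_smul_comm, smul_comm]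

theorem lambdaFam_mul_self (hcl : CliffordRel γ) (A : Fin 16) :
    lambdaFam γ A * lambdaFam γ A = 1 := by
  rw [lambdaFam_eq hcl, smul_mul_smul_comm, gammaWord_mul_self hcl, smul_smul, ← pow_add,
    ← two_mul, pow_mul, I_sq, ← pow_add, (even_lambdaPhase_add_wordSquareExp A).neg_one_pow,
    one_smul]

theorem trace_lambdaFam_mul (hcl : CliffordRel γ) (A B : Fin 16) :
    (lambdaFam γ A * lambdaFam γ B).trace = if A = B then 4 else 0 := by
  split_ifs with hAB
  · rw [hAB, lambdaFam_mul_self hcl, trace_one]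
    norm_num
  · obtain ⟨τ, hτ⟩ := exists_odd_countP_add_countP A B hAB
    refine trace_eq_zero_of_mul_eq_neg_mul (hcl.mul_self τ) ?_
    rw [mul_assoc, lambdaFam_mul_gamma hcl, mul_smul_comm, ← mul_assoc, lambdaFam_mul_gamma hcl,
      smul_mul_assoc, smul_smul, ← pow_add, add_comm, hτ.neg_one_pow, neg_one_smul, mul_assoc]

theorem sum_lambdaFam_apply_mul_apply (hcl : CliffordRel γ) (i j k l : Fin 4) :
    ∑ A, lambdaFam γ A i j * lambdaFam γ A k l = if i = l ∧ j = k then 4 else 0 :=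
  sum_apply_mul_apply_of_trace_mul (b := lambdaFam γ) (c := 4) (by norm_num) rfl
    (trace_lambdaFam_mul hcl) i j k l

theorem lambdaFam_transpose (hcl : CliffordRel γ) (hC : ChargeConj γ C) (A : Fin 16) :
    (lambdaFam γ A)ᵀ = cSign A • (C⁻¹ * lambdaFam γ A * C) := by
  rw [lambdaFam_eq hcl, transpose_smul, gammaWord_transpose hcl hC, cSign_eq, mul_smul_comm,
    smul_mul_assoc, smul_comm]

theorem inv_mul_lambdaFam (hcl : CliffordRel γ) (hC : ChargeConj γ C) (A : Fin 16) :
    C⁻¹ * lambdaFam γ A = cSign A • ((lambdaFam γ A)ᵀ * C⁻¹) := by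
  rw [lambdaFam_transpose hcl hC, smul_mul_assoc, smul_smul, cSign_mul_self, one_smul, mul_assoc,
    hC.mul_inv, mul_one]

theorem sum_cSign_mul_lambdaFam_apply_mul (hcl : CliffordRel γ) (hC : ChargeConj γ C)
    {Λ : M4} {s : ℂ} (hs : s * s = 1) (hΛ : C⁻¹ * Λ = s • (Λᵀ * C⁻¹)) (α x y z : Fin 4) :
    ∑ A, cSign A * (lambdaFam γ A α z * (C⁻¹ * (Λ * lambdaFam γ A * Λ)) x y)
      = -4 * (Λ α x * (C⁻¹ * Λ) y z) := by
  have hmove : ∀ A, cSign A • (C⁻¹ * (Λ * lambdaFam γ A * Λ))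
      = s • (Λᵀ * (lambdaFam γ A)ᵀ * (C⁻¹ * Λ)) := fun A =>
    calc cSign A • (C⁻¹ * (Λ * lambdaFam γ A * Λ))
        = cSign A • ((C⁻¹ * Λ) * lambdaFam γ A * Λ) := by simp only [mul_assoc]
      _ = s • (Λᵀ * (cSign A • (C⁻¹ * lambdaFam γ A)) * Λ) := by
          rw [hΛ]
          simp only [smul_mul_assoc, mul_smul_comm, mul_assoc, smul_comm (cSign A)]
      _ = s • (Λᵀ * (lambdaFam γ A)ᵀ * (C⁻¹ * Λ)) := by
          rw [inv_mul_lambdaFam hcl hC A, smul_smul, cSign_mul_self, one_smul]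
          simp only [mul_assoc]
  have hsymm : (C⁻¹ * Λ)ᵀ = -s • (C⁻¹ * Λ) := by
    rw [transpose_mul, hC.transpose_inv, mul_neg, neg_smul, hΛ, smul_smul, hs, one_smul]
  calc ∑ A, cSign A * (lambdaFam γ A α z * (C⁻¹ * (Λ * lambdaFam γ A * Λ)) x y)
      = s * ∑ A, lambdaFam γ A α z * (Λᵀ * (lambdaFam γ A)ᵀ * (C⁻¹ * Λ)) x y := by
        rw [Finset.mul_sum]
        refine Finset.sum_congr rfl fun A _ => ?_
        have := congr_fun₂ (hmove A) x y
        simp only [Matrix.smul_apply, smul_eq_mul] at this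
        rw [mul_left_comm, this, mul_left_comm]
    _ = s * (4 * (Λ α x * (C⁻¹ * Λ) z y)) := by
        rw [sum_apply_mul_mul_transpose_mul_apply (sum_lambdaFam_apply_mul_apply hcl),
          transpose_apply]
    _ = -4 * (Λ α x * (C⁻¹ * Λ) y z) := by
        rw [← transpose_apply (C⁻¹ * Λ), hsymm, Matrix.smul_apply, smul_eq_mul]
        linear_combination (-4 * (Λ α x * (C⁻¹ * Λ) y z)) * hs

end Clifford

section Grassmann

variable {R : Type*} [Ring R]

theorem commute_mul_of_anticomm {a b c : R} (hb : a * b = -(b * a)) (hc : a * c = -(c * a)) :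
    Commute a (b * c) := by
  rw [Commute, SemiconjBy, ← mul_assoc, hb, neg_mul, mul_assoc, hc, mul_neg, neg_neg, mul_assoc]

variable [Algebra ℂ R]

def tripleSum (θ ξ χ : Fin 4 → R) : (Fin 4 → Fin 4 → Fin 4 → ℂ) →ₗ[ℂ] R where
  toFun T := ∑ x, ∑ y, ∑ z, T x y z • (θ x * ξ y * χ z)
  map_add' T T' := by simp only [Pi.add_apply, add_smul, Finset.sum_add_distrib]
  map_smul' c T := by
    simp only [Pi.smul_apply, smul_eq_mul, mul_smul, Finset.smul_sum, RingHom.id_apply]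

theorem bilin_eq_sum (C M : M4) (ξ χ : Fin 4 → R) :
    bilin C M ξ χ = -∑ x, ∑ y, (C⁻¹ * M) x y • (ξ x * χ y) := by
  simp only [bilin, MajBar, mul_apply, Finset.sum_smul, neg_mul, Finset.sum_mul, smul_mul_assoc,
    smul_neg, Finset.smul_sum, smul_smul, Finset.sum_neg_distrib, neg_inj]
  rw [Finset.sum_comm]
  conv_rhs => rw [Finset.sum_comm]
  refine Finset.sum_congr rfl fun y _ => ?_
  rw [Finset.sum_comm]
  exact Finset.sum_congr rfl fun x _ => Finset.sum_congr rfl fun i _ => by rw [mul_comm]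

theorem sum_smul_mul_bilin (C M : M4) (v : Fin 4 → ℂ) (θ ξ χ : Fin 4 → R) :
    ∑ β, v β • (θ β * bilin C M ξ χ) = tripleSum θ ξ χ fun x y z => -(v x * (C⁻¹ * M) y z) := by
  simp only [tripleSum, LinearMap.coe_mk, AddHom.coe_mk, bilin_eq_sum, mul_neg, Finset.mul_sum,
    mul_smul_comm, smul_neg, Finset.smul_sum, smul_smul, neg_smul, Finset.sum_neg_distrib,
    mul_assoc]

theorem sum_smul_mul_bilin_of_commute {θ ξ χ : Fin 4 → R}
    (hcomm : ∀ x y z, Commute (χ z) (θ x * ξ y)) (C M : M4) (v : Fin 4 → ℂ) :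
    ∑ z, v z • (χ z * bilin C M θ ξ) = tripleSum θ ξ χ fun x y z => -(v z * (C⁻¹ * M) x y) := by
  simp only [tripleSum, LinearMap.coe_mk, AddHom.coe_mk, bilin_eq_sum, mul_neg, Finset.mul_sum,
    mul_smul_comm, smul_neg, Finset.smul_sum, smul_smul, neg_smul, Finset.sum_neg_distrib,
    (hcomm _ _ _).eq]
  rw [Finset.sum_comm]
  exact congrArg _ (Finset.sum_congr rfl fun x _ => Finset.sum_comm)

end Grassmann

theorem statement10 {R : Type*} [Ring R] [Algebra ℂ R]
    (γ : Fin 4 → M4) (C : M4) (hcl : CliffordRel γ) (hC : ChargeConj γ C)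
    (ψ : Fin 3 → Fin 4 → R)
    (hodd : ∀ a b α β, ψ a α * ψ b β = -(ψ b β * ψ a α)) :
    ∀ A₀ : Fin 16, ∀ α,
      ∑ β, lambdaFam γ A₀ α β • (ψ 0 β * bilin C (lambdaFam γ A₀) (ψ 1) (ψ 2))
      = -(4⁻¹ : ℂ) • ∑ A, cSign A •
          ∑ β, lambdaFam γ A α β •
            (ψ 2 β *
              bilin C (lambdaFam γ A₀ * lambdaFam γ A * lambdaFam γ A₀) (ψ 0) (ψ 1)) := by
  intro A₀ α
  have hcomm : ∀ x y z, Commute (ψ 2 z) (ψ 0 x * ψ 1 y) := fun x y z =>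
    commute_mul_of_anticomm (hodd _ _ _ _) (hodd _ _ _ _)
  rw [sum_smul_mul_bilin]
  simp only [sum_smul_mul_bilin_of_commute hcomm, ← map_smul, ← map_sum]
  congr 1
  funext x y z
  simp only [Pi.smul_apply, Finset.sum_apply, smul_eq_mul, mul_neg, Finset.sum_neg_distrib]
  linear_combination (-4⁻¹ : ℂ) * sum_cSign_mul_lambdaFam_apply_mul hcl hC (cSign_mul_self A₀)
    (inv_mul_lambdaFam hcl hC A₀) α x y z
end
end

section
/- Let γ be Euclidean gamma matrices with charge-conjugation matrix C, and let ψ^a : Fin 4 → R (a ∈ Fin 3) be Grassmann-odd Majorana spinors over a ℂ-algebra R. Let T^a := (1/2)·σ^a where σ^1, σ^2, σ^3 are the Pauli matrices, and set h a b c := trace(T^a·T^b·T^c). Then the scalar three-fermion operator of the gauge group SU(2) vanishes identically: Σ_{a,b,c} h a b c · ψ^a_α·(ψ̄^bψ^c) = 0 for every spinor index α. -/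
open Matrix Complex BigOperators

noncomputable section

/-- The Pauli matrices. -/
def pauli : Fin 3 → Matrix (Fin 2) (Fin 2) ℂ :=
  ![!![0, 1; 1, 0], !![0, -Complex.I; Complex.I, 0], !![1, 0; 0, -1]]

/-- h a b c := trace(T^a T^b T^c) with T^a = σ^a/2. -/
def su2h (a b c : Fin 3) : ℂ :=
  Matrix.trace (((2⁻¹ : ℂ) • pauli a) * ((2⁻¹ : ℂ) • pauli b) * ((2⁻¹ : ℂ) • pauli c))

/-!
The coefficient `h a b c = trace (T^a T^b T^c)` is antisymmetric in `b, c`: the sum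
`h a b c + h a c b = trace (T^a {T^b, T^c})` vanishes because `{σ^b, σ^c} = 2δ^{bc}` and the
Pauli matrices are traceless. The scalar bilinear `ψ̄^b ψ^c` is symmetric in `b, c`, because
`C⁻¹` is antisymmetric and the spinor components anticommute. For each `a` the sum over `b, c`
contracts an antisymmetric tensor with a symmetric one, hence is zero.
-/

lemma pauli_mul_add_mul_swap (b c : Fin 3) :
    pauli b * pauli c + pauli c * pauli b = if b = c then (2 : ℂ) • 1 else 0 := by
  fin_cases b <;> fin_cases c <;> ext i j <;> fin_cases i <;> fin_cases j <;>
    simp [pauli] <;> norm_num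

lemma trace_pauli (a : Fin 3) : (pauli a).trace = 0 := by
  fin_cases a <;> simp [pauli, Matrix.trace_fin_two]

lemma su2h_swap (a b c : Fin 3) : su2h a c b = -su2h a b c := by
  rw [eq_neg_iff_add_eq_zero]
  have hsum : su2h a c b + su2h a b c =
      (8⁻¹ : ℂ) * (pauli a * (pauli b * pauli c + pauli c * pauli b)).trace := by
    simp only [su2h, Matrix.smul_mul, Matrix.mul_smul, Matrix.trace_smul, Matrix.mul_add,
      Matrix.trace_add, Matrix.mul_assoc, smul_eq_mul]
    ring
  rw [hsum, pauli_mul_add_mul_swap]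
  split_ifs <;> simp [trace_pauli]

lemma Matrix.transpose_inv_eq_neg {n K : Type*} [Fintype n] [DecidableEq n] [CommRing K]
    {A : Matrix n n K} (hA : IsUnit A.det) (hT : Aᵀ = -A) : A⁻¹ᵀ = -A⁻¹ := by
  rw [Matrix.transpose_nonsing_inv, hT]
  exact Matrix.inv_eq_right_inv (by rw [neg_mul_neg, Matrix.mul_nonsing_inv _ hA])

section Bilinear

variable {R : Type*} [Ring R] [Algebra ℂ R]

lemma bilin_one_eq (C : M4) (ξ χ : Fin 4 → R) :
    bilin C 1 ξ χ = -∑ β, ∑ α, C⁻¹ α β • (ξ α * χ β) := by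
  simp [bilin, MajBar, Matrix.one_apply, Finset.sum_mul]

lemma bilin_one_comm {C : M4} (hC : C⁻¹ᵀ = -C⁻¹) {ξ χ : Fin 4 → R}
    (hodd : ∀ α β, ξ α * χ β = -(χ β * ξ α)) :
    bilin C 1 ξ χ = bilin C 1 χ ξ := by
  rw [bilin_one_eq, bilin_one_eq, Finset.sum_comm]
  congr 1
  refine Finset.sum_congr rfl fun β _ => Finset.sum_congr rfl fun α _ => ?_
  rw [hodd β α, ← Matrix.transpose_apply C⁻¹, hC]
  simp

end Bilinear

lemma Finset.sum_sum_smul_eq_zero_of_antisymm_of_symm {ι K M : Type*} [Fintype ι] [DivisionRing K]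
    [NeZero (2 : K)] [AddCommGroup M] [Module K M] {f : ι → ι → K} {g : ι → ι → M}
    (hf : ∀ i j, f j i = -f i j) (hg : ∀ i j, g j i = g i j) :
    ∑ i, ∑ j, f i j • g i j = 0 := by
  set S := ∑ i, ∑ j, f i j • g i j
  have hS : S = -S := calc
    S = ∑ j, ∑ i, f i j • g i j := Finset.sum_comm
    _ = ∑ j, ∑ i, -(f j i • g j i) := Finset.sum_congr rfl fun j _ =>
        Finset.sum_congr rfl fun i _ => by rw [hf j i, hg j i, neg_smul]
    _ = -S := by simp only [S, Finset.sum_neg_distrib]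
  have h2S : (2 : K) • S = 0 := by
    rw [two_smul]; nth_rewrite 1 [hS]; exact neg_add_cancel S
  exact (smul_eq_zero.mp h2S).resolve_left two_ne_zero

theorem statement14_general {R : Type*} [Ring R] [Algebra ℂ R]
    (γ : Fin 4 → M4) (C : M4) (hC : ChargeConj γ C)
    (ψ : Fin 3 → Fin 4 → R)
    (hodd : ∀ a b α β, ψ a α * ψ b β = -(ψ b β * ψ a α)) :
    ∀ α, ∑ a, ∑ b, ∑ c, su2h a b c • (ψ a α * bilin C 1 (ψ b) (ψ c)) = 0 := by
  obtain ⟨hdet, hT, -⟩ := hC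
  have hbilin b c : bilin C 1 (ψ c) (ψ b) = bilin C 1 (ψ b) (ψ c) :=
    bilin_one_comm (Matrix.transpose_inv_eq_neg hdet hT) (hodd c b)
  intro α
  refine Finset.sum_eq_zero fun a _ => ?_
  exact Finset.sum_sum_smul_eq_zero_of_antisymm_of_symm (su2h_swap a) fun b c => by rw [hbilin]

theorem statement14 {R : Type*} [Ring R] [Algebra ℂ R]
    (γ : Fin 4 → M4) (C : M4) (hcl : CliffordRel γ) (hC : ChargeConj γ C)
    (ψ : Fin 3 → Fin 4 → R)
    (hodd : ∀ a b α β, ψ a α * ψ b β = -(ψ b β * ψ a α)) :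
    ∀ α, ∑ a, ∑ b, ∑ c, su2h a b c • (ψ a α * bilin C 1 (ψ b) (ψ c)) = 0 :=
  statement14_general γ C hC ψ hodd
end
end
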